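/- There exists a linear operator on π₃ which is a local automorphism of π₃ but is not an automorphism of π₃. -/
import Mathlib


noncomputable section

/-- The multiplication of the 5-dimensional naturally graded nilpotent associative
algebra `π₃`, given on the basis `e₁, …, e₅` (indices `0, …, 4`) by
`e₁e₁ = e₂`, `e₁e₂ = e₂e₁ = e₃`, `e₁e₄ = e₅`, `e₄e₄ = e₅`. -/
def pi3Mul (x y : Fin 5 → ℂ) : Fin 5 → ℂ :=
  ![0, x 0 * y 0, x 0 * y 1 + x 1 * y 0, 0, x 0 * y 3 + x 3 * y 3]

/-- An automorphism of `π₃`: a bijective linear operator respecting the multiplication. -/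
def IsPi3Aut (Φ : (Fin 5 → ℂ) →ₗ[ℂ] (Fin 5 → ℂ)) : Prop :=
  Function.Bijective Φ ∧ ∀ x y, Φ (pi3Mul x y) = pi3Mul (Φ x) (Φ y)

/-- A local automorphism of `π₃`. -/
def IsPi3LocAut (Φ : (Fin 5 → ℂ) →ₗ[ℂ] (Fin 5 → ℂ)) : Prop :=
  ∀ x : Fin 5 → ℂ, ∃ ψ : (Fin 5 → ℂ) →ₗ[ℂ] (Fin 5 → ℂ), IsPi3Aut ψ ∧ Φ x = ψ x

/-- A family of unitriangular automorphisms of `π₃`: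
`e₁ ↦ e₁ + s e₂ + t e₃`, `e₂ ↦ e₂ + 2s e₃`, `e₄ ↦ e₄ + u e₃`, fixing `e₃, e₅`. -/
def psiFun (s t u : ℂ) (x : Fin 5 → ℂ) : Fin 5 → ℂ :=
  ![x 0, s * x 0 + x 1, t * x 0 + 2*s*x 1 + x 2 + u * x 3, x 3, x 4]

/-- `psiFun` as a linear map. -/
def psi (s t u : ℂ) : (Fin 5 → ℂ) →ₗ[ℂ] (Fin 5 → ℂ) where
  toFun := psiFun s t u
  map_add' x y := by funext i; fin_cases i <;> simp [psiFun] <;> ring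
  map_smul' c x := by funext i; fin_cases i <;> simp [psiFun] <;> ring

/-- Each `psi s t u` is an automorphism of `π₃`. -/
lemma psi_aut (s t u : ℂ) : IsPi3Aut (psi s t u) := by
  constructor
  · rw [Function.bijective_iff_has_inverse]
    refine ⟨psiFun (-s) (2*s^2-t) (-u), ?_, ?_⟩ <;>
      intro x <;> funext i <;> fin_cases i <;>
      simp [psi, psiFun] <;> ring
  · intro x y
    funext i; fin_cases i <;> simp [psi, psiFun, pi3Mul] <;> ring

/-- There is a local automorphism of `π₃` which is not an automorphism. -/
theorem exists_pi3_locAut_not_aut :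
    ∃ Φ : (Fin 5 → ℂ) →ₗ[ℂ] (Fin 5 → ℂ), IsPi3LocAut Φ ∧ ¬ IsPi3Aut Φ := by
  -- The counterexample: `Φ` fixes `e₁, e₃, e₄, e₅` and sends `e₂ ↦ e₂ + e₃`.
  refine ⟨{ toFun := fun x => ![x 0, x 1, x 1 + x 2, x 3, x 4],
            map_add' := by intro x y; funext i; fin_cases i <;> simp <;> ring
            map_smul' := by intro c x; funext i; fin_cases i <;> simp <;> ring }, ?_, ?_⟩
  · -- `Φ` is a local automorphism: pick parameters depending on `x`.
    intro x
    by_cases h : x 0 = 0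
    · exact ⟨psi (1/2) 0 0, psi_aut _ _ _, by
        funext i; fin_cases i <;> simp [psi, psiFun, h] <;> ring⟩
    · exact ⟨psi 0 (x 1 / x 0) 0, psi_aut _ _ _, by
        funext i; fin_cases i <;> simp [psi, psiFun] <;> field_simp <;> ring⟩
  · -- `Φ` is not an automorphism: `Φ(e₁·e₁) = e₂ + e₃ ≠ e₂ = Φ(e₁)·Φ(e₁)`.
    rintro ⟨-, hmul⟩
    have := congrFun (hmul ![1,0,0,0,0] ![1,0,0,0,0]) 2
    simp [pi3Mul] at this
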